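/- arXiv:2507.18443 — 2 statements merged into one kernel-verified Lean document; each statement's English description precedes it below -/
import Mathlib

section
/- Suppose F : X → Y is a map between real normed spaces, J : X → ℝ is convex with subgradient ξ = F'(x†)* ω ∈ ∂J(x†), and F satisfies the nonlinearity condition ‖F(x) - F(x†) - F'(x†)(x - x†)‖ ≤ η D_J^ξ(x, x†) for all x, where η‖ω‖ < 1. Then the variational source condition -⟨ξ, x - x†⟩ ≤ η‖ω‖ D_J^ξ(x, x†) + ‖ω‖ ‖F(x) - F(x†)‖ holds for all x ∈ X, with coefficient β₁ = η‖ω‖ < 1. -/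
/-- The Resmerita–Scherzer source and nonlinearity conditions imply a variational
source condition with `β₁ = η‖ω‖ < 1` and `β₂ = ‖ω‖`. -/
theorem resmerita_scherzer_implies_vsc {X Y : Type*}
    [NormedAddCommGroup X] [NormedSpace ℝ X] [NormedAddCommGroup Y] [NormedSpace ℝ Y]
    (F : X → Y) (J : X → ℝ) (hJ : ConvexOn ℝ Set.univ J) (xd : X)
    (A : X →L[ℝ] Y) (ω : Y →L[ℝ] ℝ) (η : ℝ) (hη0 : 0 ≤ η)
    (hβ : η * ‖ω‖ < 1)
    (hsub : ∀ x : X, J xd + (ω.comp A) (x - xd) ≤ J x)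
    (hnl : ∀ x : X, ‖F x - F xd - A (x - xd)‖ ≤ η * (J x - J xd - (ω.comp A) (x - xd))) :
    ∀ x : X, -((ω.comp A) (x - xd)) ≤
      η * ‖ω‖ * (J x - J xd - (ω.comp A) (x - xd)) + ‖ω‖ * ‖F x - F xd‖ := by
  intro x
  have key : -((ω.comp A) (x - xd))
      = ω (F x - F xd - A (x - xd)) - ω (F x - F xd) := by
    simp [map_sub]
  rw [key]
  have h1 : ω (F x - F xd - A (x - xd)) ≤ ‖ω‖ * ‖F x - F xd - A (x - xd)‖ :=
    le_trans (le_abs_self _) (ω.le_opNorm _)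
  have h2 : -(ω (F x - F xd)) ≤ ‖ω‖ * ‖F x - F xd‖ :=
    le_trans (neg_le_abs _) (ω.le_opNorm _)
  have h3 : ‖ω‖ * ‖F x - F xd - A (x - xd)‖
      ≤ η * ‖ω‖ * (J x - J xd - (ω.comp A) (x - xd)) := by
    have := mul_le_mul_of_nonneg_left (hnl x) (norm_nonneg ω)
    linarith [this]
  linarith
end

section
/- For all nonnegative functions x, y ∈ L∞(D) on a measure space D with x - y ∈ L²(D) and y > 0 almost everywhere, the Kullback–Leibler divergence KL(x, y) = ∫_D (y ln(y/x) + x - y) dμ satisfies ‖x - y‖²_{L²(D)} ≤ 2 max(‖x‖_{L∞(D)}, ‖y‖_{L∞(D)}) · KL(x, y). -/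
/-!
Pointwise, `(a - b)² ≤ 2 max(a, b) (b log (b / a) + a - b)` for `a, b > 0`. When `b ≤ a` this is
`log t ≤ sinh (log t) = (t - t⁻¹) / 2` at `t = a / b`; when `a ≤ b` it is the bound
`u + u² / 2 ≤ -log (1 - u)` by the first two terms of the logarithmic series at `u = 1 - a / b`.
Integrating, and bounding `max(x, y)` a.e. by the larger of the two `L∞` norms, gives the estimate.
-/

open MeasureTheory ENNReal

/-- The pointwise integrand of the Kullback–Leibler divergence `KL(x,y)`, with the
convention that it is `+∞` when `x = 0 < y` (and `x` when `y = 0`). -/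
noncomputable def klIntegrand {D : Type*} (x y : D → ℝ) (z : D) : ℝ≥0∞ :=
  if x z = 0 ∧ y z ≠ 0 then ⊤
  else ENNReal.ofReal (y z * Real.log (y z / x z) + x z - y z)

namespace Real

lemma log_le_half_sub_inv {t : ℝ} (ht : 1 ≤ t) : log t ≤ (t - t⁻¹) / 2 := by
  rw [← sinh_log (by linarith)]
  exact self_le_sinh_iff.2 (log_nonneg ht)

lemma add_sq_div_two_le_neg_log_one_sub {u : ℝ} (h0 : 0 ≤ u) (h1 : u < 1) :
    u + u ^ 2 / 2 ≤ -log (1 - u) := by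
  have h := sum_le_hasSum (Finset.range 2) (fun n _ ↦ by positivity)
    (hasSum_pow_div_log_of_abs_lt_one (by rwa [abs_of_nonneg h0]))
  norm_num [Finset.sum_range_succ] at h
  exact h

lemma sq_sub_le_two_max_mul_kl {a b : ℝ} (ha : 0 < a) (hb : 0 < b) :
    (a - b) ^ 2 ≤ 2 * max a b * (b * log (b / a) + a - b) := by
  rcases le_total b a with hba | hab
  · have h := log_le_half_sub_inv ((one_le_div hb).2 hba)
    have key : 2 * a * b * log (a / b) ≤ a ^ 2 - b ^ 2 :=
      calc 2 * a * b * log (a / b) ≤ 2 * a * b * ((a / b - (a / b)⁻¹) / 2) := by gcongr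
        _ = a ^ 2 - b ^ 2 := by field_simp
    rw [max_eq_left hba, ← inv_div, log_inv]
    linarith
  · have h := add_sq_div_two_le_neg_log_one_sub (u := 1 - a / b)
      (by rw [sub_nonneg, div_le_one hb]; exact hab) (by rw [sub_lt_self_iff]; positivity)
    rw [_root_.sub_sub_cancel, ← log_inv, inv_div] at h
    have key := mul_le_mul_of_nonneg_left h (by positivity : (0 : ℝ) ≤ 2 * b ^ 2)
    have expand : 2 * b ^ 2 * ((1 - a / b) + (1 - a / b) ^ 2 / 2)
        = 2 * b * (b - a) + (b - a) ^ 2 := by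
      field_simp
    rw [expand] at key
    rw [max_eq_right hab]
    linarith

end Real

lemma enorm_sub_sq_le_two_max_mul_klIntegrand {D : Type*} {x y : D → ℝ} {z : D}
    (hx : 0 ≤ x z) (hy : 0 < y z) :
    ‖x z - y z‖ₑ ^ 2 ≤ 2 * ENNReal.ofReal (max (x z) (y z)) * klIntegrand x y z := by
  rcases hx.eq_or_lt with hzero | hpos
  · have hmax : 0 < ENNReal.ofReal (max (x z) (y z)) :=
      ENNReal.ofReal_pos.2 (hy.trans_le (le_max_right _ _))
    rw [klIntegrand, if_pos ⟨hzero.symm, hy.ne'⟩, ENNReal.mul_top (by positivity)]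
    exact le_top
  · rw [klIntegrand, if_neg (fun h ↦ hpos.ne' h.1), Real.enorm_eq_ofReal_abs,
      ← ENNReal.ofReal_pow (abs_nonneg _), sq_abs, ← ENNReal.ofReal_ofNat 2,
      ← ENNReal.ofReal_mul zero_le_two, ← ENNReal.ofReal_mul (by positivity)]
    exact ENNReal.ofReal_le_ofReal (Real.sq_sub_le_two_max_mul_kl hpos hy)

lemma ofReal_ae_le_eLpNorm_top {D : Type*} [MeasurableSpace D] {μ : Measure D} {f : D → ℝ}
    (hf : ∀ᵐ z ∂μ, 0 ≤ f z) : ∀ᵐ z ∂μ, ENNReal.ofReal (f z) ≤ eLpNorm f ⊤ μ := by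
  filter_upwards [enorm_ae_le_eLpNormEssSup f μ, hf] with z hz h0
  rwa [eLpNorm_exponent_top, ← Real.enorm_eq_ofReal h0]

lemma eLpNorm_two_sq {D ε : Type*} [MeasurableSpace D] [ENorm ε] (μ : Measure D) (f : D → ε) :
    eLpNorm f 2 μ ^ 2 = ∫⁻ z, ‖f z‖ₑ ^ 2 ∂μ := by
  simpa using eLpNorm_nnreal_pow_eq_lintegral (f := f) (μ := μ) (p := 2) two_ne_zero

theorem l2_le_two_max_linf_mul_kl_general {D : Type*} [MeasurableSpace D] (μ : Measure D)
    (x y : D → ℝ)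
    (hx0 : ∀ᵐ z ∂μ, 0 ≤ x z) (hy0 : ∀ᵐ z ∂μ, 0 < y z)
    (hxb : MemLp x ⊤ μ) (hyb : MemLp y ⊤ μ) :
    eLpNorm (x - y) 2 μ ^ 2
      ≤ 2 * max (eLpNorm x ⊤ μ) (eLpNorm y ⊤ μ) * ∫⁻ z, klIntegrand x y z ∂μ := by
  set M := max (eLpNorm x ⊤ μ) (eLpNorm y ⊤ μ)
  have hM : M ≠ ⊤ := (max_lt hxb.eLpNorm_lt_top hyb.eLpNorm_lt_top).ne
  have hpt : ∀ᵐ z ∂μ, ‖(x - y) z‖ₑ ^ 2 ≤ 2 * M * klIntegrand x y z := by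
    filter_upwards [hx0, hy0, ofReal_ae_le_eLpNorm_top hx0,
      ofReal_ae_le_eLpNorm_top (hy0.mono fun _ h ↦ h.le)] with z hxz hyz hxM hyM
    calc ‖(x - y) z‖ₑ ^ 2 ≤ 2 * ENNReal.ofReal (max (x z) (y z)) * klIntegrand x y z :=
          enorm_sub_sq_le_two_max_mul_klIntegrand hxz hyz
      _ ≤ 2 * M * klIntegrand x y z := by
          rw [ENNReal.ofReal_max]
          gcongr
          exact max_le_max hxM hyM
  calc eLpNorm (x - y) 2 μ ^ 2 = ∫⁻ z, ‖(x - y) z‖ₑ ^ 2 ∂μ := eLpNorm_two_sq μ _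
    _ ≤ ∫⁻ z, 2 * M * klIntegrand x y z ∂μ := lintegral_mono_ae hpt
    _ = 2 * M * ∫⁻ z, klIntegrand x y z ∂μ :=
        lintegral_const_mul' _ _ (ENNReal.mul_ne_top ENNReal.ofNat_ne_top hM)

/-- Estimate of the squared `L²`-distance by the Kullback–Leibler divergence
(Borwein–Lewis): `‖x-y‖²_{L²} ≤ 2 max(‖x‖_∞, ‖y‖_∞) KL(x,y)` for nonnegative
essentially bounded `x, y` with `x - y ∈ L²` and `y > 0` a.e. -/
theorem l2_le_two_max_linf_mul_kl {D : Type*} [MeasurableSpace D] (μ : Measure D)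
    (x y : D → ℝ) (hxm : Measurable x) (hym : Measurable y)
    (hx0 : ∀ᵐ z ∂μ, 0 ≤ x z) (hy0 : ∀ᵐ z ∂μ, 0 < y z)
    (hxb : MemLp x ⊤ μ) (hyb : MemLp y ⊤ μ) (hxy : MemLp (x - y) 2 μ) :
    eLpNorm (x - y) 2 μ ^ 2
      ≤ 2 * max (eLpNorm x ⊤ μ) (eLpNorm y ⊤ μ) * ∫⁻ z, klIntegrand x y z ∂μ :=
  l2_le_two_max_linf_mul_kl_general μ x y hx0 hy0 hxb hyb
end
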